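/- Let n be a positive even integer and F_0,…,F_{n+1} complete oriented flags in ℝⁿ. Then there exist vectors x_0,…,x_{n+1} ∈ ℝⁿ such that ori([F_0,…,F̂_i,…,F̂_j,…,F_{n+1}]) = ori(x_0,…,x̂_i,…,x̂_j,…,x_{n+1}) for every pair 0 ≤ i < j ≤ n+1 (hats denote omission). -/

import Mathlib

noncomputable section

/-- Sign of the determinant of the matrix whose columns are `v 0, …, v (n-1)`. -/
def oriV {n : ℕ} (v : Fin n → (Fin n → ℝ)) : ℝ :=
  Real.sign (Matrix.det (Matrix.of fun i j => v j i))

open Classical in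
/-- We represent a complete oriented flag `F` in `ℝⁿ` by a basis `(F 0, …, F (n-1))`:
the flag is `Fⁱ = span(F 0, …, F (i-1))`, oriented by this basis, with the positive
half-space `(Fⁱ)⁺` the one containing `F (i-1)`.  Two bases represent the same
oriented flag iff the transition matrix is upper triangular with positive diagonal.

Given a tuple `W` representing an oriented subspace `⟨W 0, …, W (k-1)⟩` and a flag `F`,
`extVec W F` is the first vector `F d` of the flag not contained in `span W`; it is a
vector of the positive half-space `(F^{d+1})⁺`, so `snoc W (extVec W F)` represents the
oriented subspace `[⟨W⟩, F]` of Bucher–Monod. -/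
def extVec {n k : ℕ} (W : Fin k → (Fin n → ℝ)) (F : Fin n → (Fin n → ℝ)) : Fin n → ℝ :=
  if h : ∃ j, F j ∉ Submodule.span ℝ (Set.range W) then
    F (Fin.find (fun j => F j ∉ Submodule.span ℝ (Set.range W)) h)
  else 0

/-- `bracket (F_1, …, F_k)` is (the canonical representing tuple of) the oriented
`k`-dimensional subspace `[F_1, …, F_k]`, defined inductively by `[F_1] = F_1¹` and
`[F_1,…,F_k] = [[F_1,…,F_{k-1}], F_k]`. -/
def bracket {n : ℕ} : {k : ℕ} → (Fin k → (Fin n → (Fin n → ℝ))) → (Fin k → (Fin n → ℝ))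
  | 0, _ => Fin.elim0
  | (_ + 1), Fs =>
      Fin.snoc (bracket (Fs ∘ Fin.castSucc))
        (extVec (bracket (Fs ∘ Fin.castSucc)) (Fs (Fin.last _)))

/-- `coco(F_0,…,F_n) = ∏_{i=0}^{n} ori([F_0,…,F̂_i,…,F_n])`. -/
def coco {n : ℕ} (Fs : Fin (n + 1) → (Fin n → (Fin n → ℝ))) : ℝ :=
  ∏ i : Fin (n + 1), oriV (bracket (Fs ∘ i.succAbove))

/-!
Let `x_i = ∑_j s^{w_i j} F_i(j)` for a small `s > 0`, where `F_i(0), F_i(1), …` is a basis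
adapted to the flag `F_i` and the weights `w_0 ≫ w_1 ≫ ⋯ ≫ w_{n+1}` decrease fast. Expanding
`det(x_{σ 0}, …, x_{σ (n-1)})` multilinearly gives a polynomial in `s` whose nonzero terms are
indexed by choices of one flag vector per row. The choice made by the bracket takes, row by
row, the first flag vector outside the span of the previous rows, so every other choice with a
nonzero determinant is lexicographically larger; with rapidly decreasing weights it has a
strictly larger exponent. Hence the bracket's term is the lowest-order term and, for `s` small
enough, the determinant has the sign of that term.
-/

open Finset Filter Topology

lemma Real.sign_eq_sign_of_mul_pos {x y : ℝ} (h : 0 < x * y) : Real.sign x = Real.sign y := by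
  rcases pos_and_pos_or_neg_and_neg_of_mul_pos h with ⟨hx, hy⟩ | ⟨hx, hy⟩
  · rw [Real.sign_of_pos hx, Real.sign_of_pos hy]
  · rw [Real.sign_of_neg hx, Real.sign_of_neg hy]

lemma Matrix.det_of_sum_smul {R ι m : Type*} [CommRing R] [Fintype ι] [Fintype m] [DecidableEq m]
    (c : m → ι → R) (v : m → ι → m → R) :
    (Matrix.of fun k => ∑ j, c k j • v k j).det =
      ∑ J : m → ι, (∏ k, c k (J k)) * (Matrix.of fun k => v k (J k)).det := by
  have h := (Matrix.detRowAlternating (R := R) (n := m)).toMultilinearMap.map_sum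
    (fun k j => c k j • v k j)
  simp only [MultilinearMap.map_smul_univ, smul_eq_mul] at h
  exact h

lemma eventually_sign_sum_pow_mul_eq {ι : Type*} [Fintype ι] (e : ι → ℕ) (a : ι → ℝ) {d : ι}
    (hd : a d ≠ 0) (hmin : ∀ J ≠ d, a J ≠ 0 → e d < e J) :
    ∀ᶠ s in 𝓝[>] (0 : ℝ), Real.sign (∑ J, s ^ e J * a J) = Real.sign (a d) := by
  classical
  set Q : ℝ → ℝ := fun s => ∑ J, s ^ (e J - e d) * a J
  have hfactor (s : ℝ) : ∑ J, s ^ e J * a J = s ^ e d * Q s := by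
    rw [Finset.mul_sum]
    refine Finset.sum_congr rfl fun J _ => ?_
    by_cases haJ : a J = 0
    · simp [haJ]
    have hle : e d ≤ e J := by
      rcases eq_or_ne J d with rfl | hJd
      · exact le_rfl
      · exact (hmin J hJd haJ).le
    rw [← mul_assoc, ← pow_add, Nat.add_sub_cancel' hle]
  have hQ0 : Q 0 = a d := by
    refine (Finset.sum_eq_single d (fun J _ hJd => ?_) (by simp)).trans (by simp)
    by_cases haJ : a J = 0
    · simp [haJ]
    · rw [zero_pow (Nat.sub_ne_zero_of_lt (hmin J hJd haJ)), zero_mul]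
  have hQ : Continuous Q := by fun_prop
  have hpos : ∀ᶠ s in 𝓝 (0 : ℝ), 0 < Q s * a d :=
    continuousAt_const.eventually_lt (hQ.mul continuous_const).continuousAt
      (by simpa [hQ0] using mul_self_pos.2 hd)
  filter_upwards [nhdsWithin_le_nhds hpos, self_mem_nhdsWithin] with s hs (hs0 : 0 < s)
  rw [hfactor]
  exact Real.sign_eq_sign_of_mul_pos (by rw [mul_assoc]; exact mul_pos (pow_pos hs0 _) hs)

lemma sum_mul_lt_sum_mul_of_lex {k n : ℕ} {w : Fin k → ℕ}
    (hw : ∀ i, n * ∑ m ∈ Ioi i, w m < w i) {d J : Fin k → Fin n} {i : Fin k}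
    (heq : ∀ m < i, J m = d m) (hlt : d i < J i) :
    ∑ m, w m * (d m : ℕ) < ∑ m, w m * (J m : ℕ) := by
  zify
  rw [← sub_pos, ← Finset.sum_sub_distrib]
  have hzero : ∀ m ∈ univ, m ∉ Ici i → (w m * (J m : ℤ) - w m * (d m : ℤ)) = 0 := by
    intro m _ hm
    rw [heq m (not_le.1 (by simpa using hm))]
    ring
  rw [← Finset.sum_subset (subset_univ _) hzero, ← add_sum_Ioi_eq_sum_Ici]
  have hi : (w i : ℤ) ≤ w i * (J i : ℤ) - w i * (d i : ℤ) := by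
    rw [← mul_sub]
    have : (d i : ℤ) + 1 ≤ J i := by exact_mod_cast hlt
    exact le_mul_of_one_le_right (by positivity) (by linarith)
  have htail : -(n * ∑ m ∈ Ioi i, (w m : ℤ)) ≤
      ∑ m ∈ Ioi i, (w m * (J m : ℤ) - w m * (d m : ℤ)) := by
    rw [Finset.mul_sum, ← Finset.sum_neg_distrib]
    refine Finset.sum_le_sum fun m _ => ?_
    have : (d m : ℤ) - J m ≤ n := by have := (d m).isLt; omega
    nlinarith [(w m).cast_nonneg (α := ℤ)]
  have := hw i
  zify at this
  linarith

lemma extVec_spec {n k : ℕ} (W : Fin k → Fin n → ℝ) {F : Fin n → Fin n → ℝ}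
    (hF : LinearIndependent ℝ F) (hk : k < n) :
    ∃ j, extVec W F = F j ∧ F j ∉ Submodule.span ℝ (Set.range W) ∧
      ∀ j' < j, F j' ∈ Submodule.span ℝ (Set.range W) := by
  have hex : ∃ j, F j ∉ Submodule.span ℝ (Set.range W) := by
    by_contra! h
    have hle := Submodule.finrank_mono (Submodule.span_le.2 (Set.range_subset_iff.2 h))
    rw [finrank_span_eq_card hF] at hle
    have := finrank_range_le_card (R := ℝ) W
    rw [Set.finrank] at this
    simp only [Fintype.card_fin] at hle this
    omega
  classical
  unfold extVec
  rw [dif_pos hex]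
  exact ⟨_, rfl, Fin.find_spec hex, fun j' hj' => not_not.1 (Fin.find_min hex hj')⟩

lemma bracket_succ {n k : ℕ} (G : Fin (k + 1) → Fin n → Fin n → ℝ) :
    bracket G = Fin.snoc (bracket (G ∘ Fin.castSucc))
      (extVec (bracket (G ∘ Fin.castSucc)) (G (Fin.last k))) :=
  rfl

lemma exists_pivots_bracket {n : ℕ} : ∀ {k : ℕ} (G : Fin k → Fin n → Fin n → ℝ), k ≤ n →
    (∀ m, LinearIndependent ℝ (G m)) →
    ∃ d : Fin k → Fin n, (∀ m, bracket G m = G m (d m)) ∧ LinearIndependent ℝ (bracket G) ∧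
      ∀ m, ∀ j < d m, G m j ∈ Submodule.span ℝ (bracket G '' Set.Iio m)
  | 0, _, _, _ => ⟨Fin.elim0, fun m => m.elim0, linearIndependent_empty_type, fun m => m.elim0⟩
  | k + 1, G, hk, hG => by
    obtain ⟨d, hbr, hind, htri⟩ := exists_pivots_bracket (G ∘ Fin.castSucc) (by omega)
      fun m => hG _
    obtain ⟨j₀, hext, hnot, hbefore⟩ := extVec_spec (bracket (G ∘ Fin.castSucc)) (hG (Fin.last k))
      (by omega)
    have hinit (m : Fin k) : bracket G m.castSucc = bracket (G ∘ Fin.castSucc) m := by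
      rw [bracket_succ, Fin.snoc_castSucc]
    refine ⟨Fin.snoc d j₀, fun m => ?_, ?_, fun m => ?_⟩
    · induction m using Fin.lastCases with
      | last => rw [bracket_succ, Fin.snoc_last, Fin.snoc_last, hext]
      | cast m => rw [hinit, Fin.snoc_castSucc, hbr]; rfl
    · rw [bracket_succ, linearIndependent_finSnoc, hext]
      exact ⟨hind, hnot⟩
    · induction m using Fin.lastCases with
      | last =>
        intro j hj
        rw [Fin.snoc_last] at hj
        refine Submodule.span_mono ?_ (hbefore j hj)
        rintro _ ⟨m, rfl⟩
        exact ⟨m.castSucc, Fin.castSucc_lt_last m, hinit m⟩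
      | cast m =>
        intro j hj
        rw [Fin.snoc_castSucc] at hj
        refine Submodule.span_mono ?_ (htri m j hj)
        rintro _ ⟨m', hm', rfl⟩
        exact ⟨m'.castSucc, Fin.castSucc_lt_castSucc_iff.2 hm', hinit m'⟩

lemma sum_mul_pivots_lt {n : ℕ} {w : Fin n → ℕ} (hw : ∀ i, n * ∑ m ∈ Ioi i, w m < w i)
    {G : Fin n → Fin n → Fin n → ℝ} {d : Fin n → Fin n} (hbr : ∀ m, bracket G m = G m (d m))
    (htri : ∀ m, ∀ j < d m, G m j ∈ Submodule.span ℝ (bracket G '' Set.Iio m))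
    {J : Fin n → Fin n} (hJ : J ≠ d) (hdet : (Matrix.of fun k => G k (J k)).det ≠ 0) :
    ∑ m, w m * (d m : ℕ) < ∑ m, w m * (J m : ℕ) := by
  classical
  have hex : ∃ k, J k ≠ d k := Function.ne_iff.1 hJ
  set i := Fin.find _ hex
  have heq : ∀ m < i, J m = d m := fun m hm => not_not.1 (Fin.find_min hex hm)
  refine sum_mul_lt_sum_mul_of_lex hw heq (lt_of_le_of_ne (not_lt.1 fun hlt => ?_)
    (Fin.find_spec hex).symm)
  have hmem := htri i (J i) hlt
  have himage : bracket G '' Set.Iio i = (fun k => G k (J k)) '' Set.Iio i :=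
    Set.image_congr fun m hm => by rw [hbr, heq m hm]
  rw [himage] at hmem
  exact (Matrix.linearIndependent_rows_of_det_ne_zero hdet).notMem_span_image (lt_irrefl i) hmem

lemma oriV_eq_sign_det {n : ℕ} (v : Fin n → Fin n → ℝ) : oriV v = Real.sign (Matrix.of v).det := by
  rw [oriV, ← Matrix.det_transpose]
  rfl

def flagVector {n : ℕ} (t : ℝ) (F : Fin n → Fin n → ℝ) : Fin n → ℝ :=
  ∑ j : Fin n, t ^ (j : ℕ) • F j

lemma eventually_oriV_flagVector_eq_oriV_bracket {n : ℕ} {w : Fin n → ℕ}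
    (hw : ∀ i, n * ∑ m ∈ Ioi i, w m < w i) (G : Fin n → Fin n → Fin n → ℝ)
    (hG : ∀ m, LinearIndependent ℝ (G m)) :
    ∀ᶠ s in 𝓝[>] (0 : ℝ), oriV (fun k => flagVector (s ^ w k) (G k)) = oriV (bracket G) := by
  obtain ⟨d, hbr, hind, htri⟩ := exists_pivots_bracket G le_rfl hG
  set a : (Fin n → Fin n) → ℝ := fun J => (Matrix.of fun k => G k (J k)).det
  have hexpand (s : ℝ) : (Matrix.of fun k => flagVector (s ^ w k) (G k)).det =
      ∑ J, s ^ (∑ k, w k * (J k : ℕ)) * a J := by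
    simp only [flagVector, Matrix.det_of_sum_smul, ← pow_mul, Finset.prod_pow_eq_pow_sum, a]
  rw [show bracket G = fun k => G k (d k) from funext hbr] at hind ⊢
  have had : a d ≠ 0 :=
    ((Matrix.isUnit_iff_isUnit_det _).1 (Matrix.linearIndependent_rows_iff_isUnit.1 hind)).ne_zero
  filter_upwards [eventually_sign_sum_pow_mul_eq (fun J => ∑ k, w k * (J k : ℕ)) a had
    fun J hJ haJ => sum_mul_pivots_lt hw hbr htri hJ haJ] with s hs
  rw [oriV_eq_sign_det, oriV_eq_sign_det, hexpand, hs]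

lemma mul_sum_Ioi_lt_of_geometric {k n B : ℕ} {w : Fin k → ℕ} (hB : n * k < B)
    (hpos : ∀ i, 0 < w i) (hdec : ∀ i m, i < m → B * w m ≤ w i) (i : Fin k) :
    n * ∑ m ∈ Ioi i, w m < w i := by
  refine Nat.lt_of_mul_lt_mul_left (a := B) ?_
  calc B * (n * ∑ m ∈ Ioi i, w m) = n * ∑ m ∈ Ioi i, B * w m := by
        rw [mul_left_comm, Finset.mul_sum]
    _ ≤ n * (k * w i) := by
        refine Nat.mul_le_mul_left _ ?_
        calc ∑ m ∈ Ioi i, B * w m ≤ #(Ioi i) * w i :=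
              Finset.sum_le_card_nsmul _ _ _ fun m hm => hdec i m (Finset.mem_Ioi.1 hm)
          _ ≤ k * w i := Nat.mul_le_mul_right _ ((card_le_univ _).trans (by simp))
    _ < B * w i := by rw [← mul_assoc]; exact Nat.mul_lt_mul_of_pos_right hB (hpos i)

lemma mul_sum_Ioi_pow_rev_lt {k N : ℕ} {σ : Fin k → Fin N} (hσ : StrictMono σ) (i : Fin k) :
    k * ∑ m ∈ Ioi i, (k * k + 1) ^ ((σ m).rev : ℕ) < (k * k + 1) ^ ((σ i).rev : ℕ) := by
  refine mul_sum_Ioi_lt_of_geometric (Nat.lt_succ_self _) (fun _ => by positivity)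
    (fun i m him => ?_) i
  rw [← pow_succ']
  exact Nat.pow_le_pow_right (by positivity) (Fin.rev_lt_rev.2 (hσ him))

theorem stmt11_general (n : ℕ)
    (Fs : Fin (n + 2) → (Fin n → (Fin n → ℝ))) (hFs : ∀ i, LinearIndependent ℝ (Fs i)) :
    ∃ x : Fin (n + 2) → (Fin n → ℝ),
      ∀ (j : Fin (n + 2)) (i : Fin (n + 1)),
        oriV (bracket (Fs ∘ j.succAbove ∘ i.succAbove)) =
          oriV (x ∘ j.succAbove ∘ i.succAbove) := by
  set w : Fin (n + 2) → ℕ := fun i => (n * n + 1) ^ (i.rev : ℕ)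
  have hev : ∀ᶠ s in 𝓝[>] (0 : ℝ), ∀ (j : Fin (n + 2)) (i : Fin (n + 1)),
      oriV (fun k => flagVector (s ^ w (j.succAbove (i.succAbove k)))
        (Fs (j.succAbove (i.succAbove k)))) = oriV (bracket (Fs ∘ j.succAbove ∘ i.succAbove)) := by
    simp only [eventually_all]
    exact fun j i => eventually_oriV_flagVector_eq_oriV_bracket
      (mul_sum_Ioi_pow_rev_lt ((Fin.strictMono_succAbove j).comp (Fin.strictMono_succAbove i)))
      _ fun _ => hFs _
  obtain ⟨s, hs⟩ := hev.exists
  exact ⟨fun i => flagVector (s ^ w i) (Fs i), fun j i => (hs j i).symm⟩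

/-- for complete oriented flags `F_0,…,F_{n+1}` there exist vectors
`x_0,…,x_{n+1}` with `ori([F_0,…,F̂_i,…,F̂_j,…,F_{n+1}]) = ori(x_0,…,x̂_i,…,x̂_j,…,x_{n+1})`
for every pair of omitted indices (every doubly-omitted subtuple being of the form
`F ∘ j.succAbove ∘ i.succAbove`). -/
theorem stmt11 (n : ℕ) (hn : 0 < n) (he : Even n)
    (Fs : Fin (n + 2) → (Fin n → (Fin n → ℝ))) (hFs : ∀ i, LinearIndependent ℝ (Fs i)) :
    ∃ x : Fin (n + 2) → (Fin n → ℝ),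
      ∀ (j : Fin (n + 2)) (i : Fin (n + 1)),
        oriV (bracket (Fs ∘ j.succAbove ∘ i.succAbove)) =
          oriV (x ∘ j.succAbove ∘ i.succAbove) :=
  stmt11_general n Fs hFs

end
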